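/- arXiv:1212.4129 — 7 statements merged into one kernel-verified Lean document; each statement's English description precedes it below -/
import Mathlib

section
/- For any undirected graph X and any vertex set L, the induced matching number of the extended tensor product of the complete graph K_L with X is at most the induced matching number of X: im(K_L ×_e X) ≤ im(X). -/
open SimpleGraph

def tensor {α β : Type*} (G : SimpleGraph α) (H : SimpleGraph β) :
    SimpleGraph (α × β) where
  Adj p q := G.Adj p.1 q.1 ∧ H.Adj p.2 q.2
  symm := ⟨fun p q h => ⟨h.1.symm, h.2.symm⟩⟩
  loopless := ⟨fun p h => G.loopless.irrefl p.1 h.1⟩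

def etensor {α β : Type*} (G : SimpleGraph α) (H : SimpleGraph β) :
    SimpleGraph (α × β) where
  Adj p q := (G.Adj p.1 q.1 ∨ p.1 = q.1) ∧ H.Adj p.2 q.2
  symm := ⟨fun p q h => ⟨h.1.imp (fun h' => h'.symm) (fun h' => h'.symm), h.2.symm⟩⟩
  loopless := ⟨fun p h => H.loopless.irrefl p.2 h.2⟩

def disj {α β : Type*} (G : SimpleGraph α) (H : SimpleGraph β) :
    SimpleGraph (α × β) where
  Adj p q := G.Adj p.1 q.1 ∨ H.Adj p.2 q.2
  symm := ⟨fun p q h => h.imp (fun h' => h'.symm) (fun h' => h'.symm)⟩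
  loopless := ⟨fun p h => h.elim (G.loopless.irrefl p.1) (H.loopless.irrefl p.2)⟩

def lexProd {α β : Type*} (G : SimpleGraph α) (H : SimpleGraph β) :
    SimpleGraph (α × β) where
  Adj p q := G.Adj p.1 q.1 ∨ (p.1 = q.1 ∧ H.Adj p.2 q.2)
  symm := ⟨fun p q h => h.imp (fun h' => h'.symm) (fun h' => ⟨h'.1.symm, h'.2.symm⟩)⟩
  loopless := ⟨fun p h => h.elim (G.loopless.irrefl p.1) (fun h' => H.loopless.irrefl p.2 h'.2)⟩

def disjPow {α : Type*} (G : SimpleGraph α) (k : ℕ) : SimpleGraph (Fin k → α) where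
  Adj x y := ∃ i, G.Adj (x i) (y i)
  symm := ⟨fun x y h => h.imp (fun i hi => hi.symm)⟩
  loopless := ⟨fun x h => h.elim (fun i hi => G.loopless.irrefl (x i) hi)⟩

def lexPow {α : Type*} (G : SimpleGraph α) (k : ℕ) : SimpleGraph (Fin k → α) where
  Adj x y := ∃ i, G.Adj (x i) (y i) ∧ ∀ j, j < i → x j = y j
  symm := ⟨fun x y h => h.imp (fun i hi => ⟨hi.1.symm, fun j hj => (hi.2 j hj).symm⟩)⟩
  loopless := ⟨fun x h => h.elim (fun i hi => G.loopless.irrefl (x i) hi.1)⟩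

def IsIndMatching {V : Type*} (G : SimpleGraph V) {n : ℕ} (a b : Fin n → V) : Prop :=
  (∀ i, G.Adj (a i) (b i)) ∧
  ∀ i j, i ≠ j → ¬ G.Adj (a i) (a j) ∧ ¬ G.Adj (a i) (b j) ∧ ¬ G.Adj (b i) (b j)

noncomputable def imNum {V : Type*} (G : SimpleGraph V) : ℕ :=
  sSup {n | ∃ a b : Fin n → V, IsIndMatching G a b}

def SemiCond {V : Type*} (G : SimpleGraph V) (σ : V → ℕ) (u u' v v' : V) : Prop :=
  σ u < σ u' → σ u < σ v → σ v < σ v' → ¬ G.Adj u v ∧ ¬ G.Adj u v'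

def IsSemiIndMatching {V : Type*} (G : SimpleGraph V) (σ : V → ℕ) {n : ℕ}
    (a b : Fin n → V) : Prop :=
  (∀ i, G.Adj (a i) (b i)) ∧
  (∀ i j, i ≠ j → a i ≠ a j ∧ a i ≠ b j ∧ b i ≠ b j) ∧
  (∀ i j, i ≠ j →
    SemiCond G σ (a i) (b i) (a j) (b j) ∧ SemiCond G σ (a i) (b i) (b j) (a j) ∧
    SemiCond G σ (b i) (a i) (a j) (b j) ∧ SemiCond G σ (b i) (a i) (b j) (a j))

noncomputable def simNumOrd {V : Type*} (G : SimpleGraph V) (σ : V → ℕ) : ℕ :=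
  sSup {n | ∃ a b : Fin n → V, IsSemiIndMatching G σ a b}

noncomputable def simNum {V : Type*} (G : SimpleGraph V) : ℕ :=
  sSup {n | ∃ σ : V → ℕ, Function.Injective σ ∧
    ∃ a b : Fin n → V, IsSemiIndMatching G σ a b}

noncomputable def indepNum {V : Type*} (G : SimpleGraph V) : ℕ :=
  sSup {n | ∃ s : Finset V, s.card = n ∧ ∀ u ∈ s, ∀ v ∈ s, ¬ G.Adj u v}

noncomputable def chromNum {V : Type*} (G : SimpleGraph V) : ℕ :=
  sInf {n | G.Colorable n}

def vecLT {d : ℕ} (x y : Fin d → ℝ) : Prop := (∀ i, x i ≤ y i) ∧ ∃ i, x i < y i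

def Realizes {V : Type*} (R : V → V → Prop) {d : ℕ} (φ : V → Fin d → ℝ) : Prop :=
  ∀ u v, u ≠ v → (R u v ↔ vecLT (φ u) (φ v))

noncomputable def posetDim {V : Type*} (R : V → V → Prop) : ℕ :=
  sInf {d | ∃ φ : V → Fin d → ℝ, Realizes R φ}

def IsHeightTwoPoset {V : Type*} (R : V → V → Prop) : Prop :=
  (∀ u, ¬ Relation.TransGen R u u) ∧
  (∀ u v w, R u v → R v w → R u w) ∧
  (∀ u, (∀ v, ¬ R v u) ∨ (∀ v, ¬ R u v))

def etensorRel {α β : Type*} (G : SimpleGraph α) (R : β → β → Prop) :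
    α × β → α × β → Prop :=
  fun p q => (G.Adj p.1 q.1 ∨ p.1 = q.1) ∧ R p.2 q.2

def tensorRel {α β : Type*} (G : SimpleGraph α) (R : β → β → Prop) :
    α × β → α × β → Prop :=
  fun p q => G.Adj p.1 q.1 ∧ R p.2 q.2

def K2dir : Fin 2 → Fin 2 → Prop := fun i j => i = 0 ∧ j = 1


/-! Every two vertices of `K_L` are adjacent or equal, so `K_L ×_e X` is the pullback of `X` along
the projection `L × V → V`. Induced matchings pull back and push forward along any surjection (lift
through a section), so for nonempty `L` both graphs have the same sets of induced matching sizes and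
hence the same `imNum`, even when these sets are unbounded and `sSup` takes its junk value `0`. -/

theorem isIndMatching_comap_iff {V W : Type*} (G : SimpleGraph V) (f : W → V) {n : ℕ}
    (a b : Fin n → W) : IsIndMatching (G.comap f) a b ↔ IsIndMatching G (f ∘ a) (f ∘ b) :=
  Iff.rfl

theorem imNum_comap_of_surjective {V W : Type*} (G : SimpleGraph V) {f : W → V}
    (hf : Function.Surjective f) : imNum (G.comap f) = imNum G := by
  unfold imNum
  congr 1
  ext n
  constructor
  · rintro ⟨a, b, h⟩
    exact ⟨f ∘ a, f ∘ b, (isIndMatching_comap_iff G f a b).1 h⟩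
  · rintro ⟨a, b, h⟩
    have hsection (c : Fin n → V) : f ∘ (Function.surjInv hf ∘ c) = c :=
      funext fun i => Function.surjInv_eq hf (c i)
    refine ⟨Function.surjInv hf ∘ a, Function.surjInv hf ∘ b, ?_⟩
    rwa [isIndMatching_comap_iff, hsection, hsection]

theorem imNum_of_isEmpty {V : Type*} [IsEmpty V] (G : SimpleGraph V) : imNum G = 0 := by
  refine Nat.eq_zero_of_le_zero (csSup_le ⟨0, Fin.elim0, Fin.elim0, fun i => i.elim0,
    fun i => i.elim0⟩ ?_)
  rintro (_ | n) ⟨a, -, -⟩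
  · rfl
  · exact isEmptyElim (a 0)

theorem etensor_top_eq_comap_snd {L V : Type*} (X : SimpleGraph V) :
    etensor (⊤ : SimpleGraph L) X = X.comap Prod.snd := by
  ext p q
  simp only [etensor, top_adj, comap_adj, and_iff_right_iff_imp]
  exact fun _ => ne_or_eq p.1 q.1

theorem stmt1_general {L V : Type*} (X : SimpleGraph V) :
    imNum (etensor (⊤ : SimpleGraph L) X) ≤ imNum X := by
  cases isEmpty_or_nonempty L
  · rw [imNum_of_isEmpty]
    exact Nat.zero_le _
  · rw [etensor_top_eq_comap_snd, imNum_comap_of_surjective X Prod.snd_surjective]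

theorem stmt1 {L V : Type*} [Fintype L] [Fintype V] (X : SimpleGraph V) :
    imNum (etensor (⊤ : SimpleGraph L) X) ≤ imNum X :=
  stmt1_general X
end

section
/- For any undirected graphs G, H, and J, the induced matching number is subadditive over the disjunctive product: im((G ∨ H) × J) ≤ im(G × J) + im(H × J). -/
open SimpleGraph

/-!
Every edge of an induced matching of `(G ∨ H) × J` has adjacent `G`-coordinates or adjacent
`H`-coordinates. The projections `(α × β) × γ → α × γ` and `→ β × γ` reflect adjacency into
`(G ∨ H) × J`, so they send the edges of the first kind to an induced matching of `G × J` and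
the rest to an induced matching of `H × J`.
-/

namespace IsIndMatching

variable {V W : Type*} {G : SimpleGraph V} {G' : SimpleGraph W} {n : ℕ} {a b : Fin n → V}

theorem injective_left (h : IsIndMatching G a b) : Function.Injective a := by
  intro i j hij
  by_contra hne
  exact (h.2 i j hne).2.1 (hij ▸ h.1 j)

theorem le_imNum [Finite V] (h : IsIndMatching G a b) : n ≤ imNum G := by
  have hbdd : BddAbove {n | ∃ a b : Fin n → V, IsIndMatching G a b} := by
    cases nonempty_fintype V
    refine ⟨Fintype.card V, ?_⟩
    rintro m ⟨a, b, hm⟩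
    simpa using Fintype.card_le_of_injective a hm.injective_left
  exact le_csSup hbdd ⟨a, b, h⟩

theorem comp_embedding {m : ℕ} (h : IsIndMatching G a b) (e : Fin m ↪ Fin n) :
    IsIndMatching G (a ∘ e) (b ∘ e) :=
  ⟨fun i => h.1 (e i), fun _ _ hij => h.2 _ _ (e.injective.ne hij)⟩

theorem map (h : IsIndMatching G a b) (f : V → W)
    (hf : ∀ u v, G'.Adj (f u) (f v) → G.Adj u v) (hab : ∀ i, G'.Adj (f (a i)) (f (b i))) :
    IsIndMatching G' (f ∘ a) (f ∘ b) :=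
  ⟨hab, fun i j hij =>
    have h' := h.2 i j hij
    ⟨fun hadj => h'.1 (hf _ _ hadj), fun hadj => h'.2.1 (hf _ _ hadj),
      fun hadj => h'.2.2 (hf _ _ hadj)⟩⟩

theorem card_le_imNum_of_map [Finite W] (h : IsIndMatching G a b) (f : V → W)
    (hf : ∀ u v, G'.Adj (f u) (f v) → G.Adj u v) (s : Finset (Fin n))
    (hs : ∀ i ∈ s, G'.Adj (f (a i)) (f (b i))) : s.card ≤ imNum G' :=
  ((h.comp_embedding (s.orderEmbOfFin rfl).toEmbedding).map f hf
    fun i => hs _ (s.orderEmbOfFin_mem rfl i)).le_imNum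

end IsIndMatching

section DisjunctiveTensor

variable {α β γ : Type*} {G : SimpleGraph α} {H : SimpleGraph β} {J : SimpleGraph γ}

theorem tensor_disj_adj_of_tensor_left {p q : (α × β) × γ}
    (h : (tensor G J).Adj (p.1.1, p.2) (q.1.1, q.2)) : (tensor (disj G H) J).Adj p q :=
  ⟨Or.inl h.1, h.2⟩

theorem tensor_disj_adj_of_tensor_right {p q : (α × β) × γ}
    (h : (tensor H J).Adj (p.1.2, p.2) (q.1.2, q.2)) : (tensor (disj G H) J).Adj p q :=
  ⟨Or.inr h.1, h.2⟩

end DisjunctiveTensor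

theorem stmt2 {α β γ : Type*} [Fintype α] [Fintype β] [Fintype γ]
    (G : SimpleGraph α) (H : SimpleGraph β) (J : SimpleGraph γ) :
    imNum (tensor (disj G H) J) ≤ imNum (tensor G J) + imNum (tensor H J) := by
  classical
  refine csSup_le' ?_
  rintro n ⟨a, b, h⟩
  let S := Finset.univ.filter fun i => G.Adj (a i).1.1 (b i).1.1
  have hG : S.card ≤ imNum (tensor G J) :=
    h.card_le_imNum_of_map (fun p => (p.1.1, p.2)) (fun _ _ => tensor_disj_adj_of_tensor_left) S
      fun i hi => ⟨(Finset.mem_filter.1 hi).2, (h.1 i).2⟩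
  have hH : Sᶜ.card ≤ imNum (tensor H J) :=
    h.card_le_imNum_of_map (fun p => (p.1.2, p.2)) (fun _ _ => tensor_disj_adj_of_tensor_right) Sᶜ
      fun i hi => ⟨(h.1 i).1.resolve_left (by simpa [S] using hi), (h.1 i).2⟩
  calc n = S.card + Sᶜ.card := by simp [Finset.card_add_card_compl]
    _ ≤ imNum (tensor G J) + imNum (tensor H J) := add_le_add hG hH
end

section
/- For any undirected graph G, the induced matching number of the bipartite double cover with loops added, B_e[G] = G ×_e K_2, is at least the independence number of G: α(G) ≤ im(G ×_e K_2). -/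
open SimpleGraph

theorem IsIndMatching.etensor_of_indep {V W : Type*} {G : SimpleGraph V} {H : SimpleGraph W}
    {n : ℕ} {f : Fin n → V} (hf : Function.Injective f) (hind : ∀ i j, ¬ G.Adj (f i) (f j))
    {x y : W} (hxy : H.Adj x y) :
    IsIndMatching (etensor G H) (fun i => (f i, x)) (fun i => (f i, y)) := by
  refine ⟨fun _ => ⟨Or.inr rfl, hxy⟩, fun i j hij => ⟨fun h => H.loopless.irrefl x h.2, ?_,
    fun h => H.loopless.irrefl y h.2⟩⟩
  rintro ⟨hG | heq, -⟩
  exacts [hind i j hG, hij (hf heq)]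

theorem IsIndMatching.injective_left_s3 {V : Type*} {G : SimpleGraph V} {n : ℕ} {a b : Fin n → V}
    (h : IsIndMatching G a b) : Function.Injective a := by
  intro i j hij
  by_contra hne
  exact (h.2 i j hne).2.1 (hij ▸ h.1 j)

theorem le_imNum {V : Type*} [Finite V] {G : SimpleGraph V} {n : ℕ} {a b : Fin n → V}
    (h : IsIndMatching G a b) : n ≤ imNum G := by
  refine le_csSup ⟨Nat.card V, ?_⟩ ⟨a, b, h⟩
  rintro m ⟨a', _, h'⟩
  simpa using Nat.card_le_card_of_injective a' h'.injective_left_s3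

theorem exists_indep_finset_card_eq_indepNum {V : Type*} [Fintype V] (G : SimpleGraph V) :
    ∃ s : Finset V, s.card = _root_.indepNum G ∧ ∀ u ∈ s, ∀ v ∈ s, ¬ G.Adj u v := by
  refine Nat.sSup_mem (s := {n | ∃ s : Finset V, s.card = n ∧ ∀ u ∈ s, ∀ v ∈ s, ¬ G.Adj u v})
    ⟨0, ∅, by simp⟩ ⟨Fintype.card V, ?_⟩
  rintro n ⟨s, rfl, -⟩
  exact s.card_le_univ

theorem stmt3 {V : Type*} [Fintype V] (G : SimpleGraph V) :
    _root_.indepNum G ≤ imNum (etensor G (⊤ : SimpleGraph (Fin 2))) := by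
  obtain ⟨s, hcard, hind⟩ := exists_indep_finset_card_eq_indepNum G
  let e : Fin (_root_.indepNum G) ≃ s := (s.equivFinOfCardEq hcard).symm
  have he : Function.Injective (fun i => (e i : V)) := Subtype.val_injective.comp e.injective
  exact le_imNum (IsIndMatching.etensor_of_indep he (fun i j => hind _ (e i).2 _ (e j).2)
    ((top_adj 0 1).mpr Fin.zero_ne_one))
end

section
/- Let A be an undirected graph and let U, V be disjoint vertex sets. Let K_{U,V} be the complete height-two poset with minimal elements U and maximal elements V (edges uv for all u ∈ U, v ∈ V), and let K⃗_2 be the poset with one edge from a minimal vertex to a maximal vertex. Then dim(A ×_e K_{U,V}) ≤ dim(A ×_e K⃗_2). -/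
open SimpleGraph

/-!
Let `f : U ⊕ W → Fin 2` send `U` to the minimal and `W` to the maximal element of `K⃗₂`.
Then `A ×ₑ K_{U,W}` is the pullback of `A ×ₑ K⃗₂` along `id × f`. A realizer of an irreflexive
relation pulls back along any map, and when `f` is onto it pushes forward through a section, so
the two dimensions agree. If `U` or `W` is empty, `A ×ₑ K_{U,W}` has no relations at all and its
dimension is `0`.
-/

open Function

section Realizes

variable {V V' : Type*} {R : V → V → Prop} {d : ℕ}

lemma vecLT_irrefl (x : Fin d → ℝ) : ¬ vecLT x x := by
  rintro ⟨-, i, hi⟩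
  exact lt_irrefl _ hi

lemma Realizes.comp (hR : ∀ v, ¬ R v v) {φ : V → Fin d → ℝ} (hφ : Realizes R φ) (g : V' → V) :
    Realizes (fun u v => R (g u) (g v)) (φ ∘ g) := by
  intro u v _
  by_cases h : g u = g v
  · simp only [comp_apply, h, hR, vecLT_irrefl]
  · exact hφ _ _ h

lemma Realizes.of_comp {g : V' → V} (hg : Surjective g) {φ : V' → Fin d → ℝ}
    (hφ : Realizes (fun u v => R (g u) (g v)) φ) : Realizes R (φ ∘ surjInv hg) := by
  intro x y hxy
  simpa only [comp_apply, surjInv_eq] using hφ _ _ ((injective_surjInv hg).ne hxy)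

lemma posetDim_comp_of_surjective (hR : ∀ v, ¬ R v v) {g : V' → V} (hg : Surjective g) :
    posetDim (fun u v => R (g u) (g v)) = posetDim R := by
  unfold posetDim
  congr 1
  ext d
  exact ⟨fun ⟨_, hφ⟩ => ⟨_, hφ.of_comp hg⟩, fun ⟨_, hφ⟩ => ⟨_, hφ.comp hR g⟩⟩

lemma posetDim_eq_zero_of_forall_not (hR : ∀ u v, ¬ R u v) : posetDim R = 0 :=
  Nat.sInf_eq_zero.2 <| Or.inl
    ⟨fun _ => Fin.elim0, fun u v _ => iff_of_false (hR u v) fun ⟨_, i, _⟩ => i.elim0⟩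

end Realizes

section ExtendedTensor

variable {α β β' : Type*} (A : SimpleGraph α)

lemma etensorRel_irrefl {R : β → β → Prop} (hR : ∀ b, ¬ R b b) (x : α × β) :
    ¬ etensorRel A R x x :=
  fun h => hR _ h.2

lemma etensorRel_comp (R : β → β → Prop) (f : β' → β) :
    etensorRel A (fun p q => R (f p) (f q)) =
      fun x y => etensorRel A R (Prod.map id f x) (Prod.map id f y) :=
  rfl

end ExtendedTensor

lemma K2dir_irrefl (i : Fin 2) : ¬ K2dir i i :=
  fun ⟨h0, h1⟩ => absurd (h0.symm.trans h1) (by decide)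

section CompleteBipartite

variable {U W : Type*}

def bipartiteLevel : U ⊕ W → Fin 2 := Sum.elim (fun _ => 0) (fun _ => 1)

lemma completeBipartite_iff_K2dir (p q : U ⊕ W) :
    ((∃ u, p = Sum.inl u) ∧ (∃ w, q = Sum.inr w)) ↔
      K2dir (bipartiteLevel p) (bipartiteLevel q) := by
  cases p <;> cases q <;> simp [bipartiteLevel, K2dir]

lemma bipartiteLevel_surjective [Nonempty U] [Nonempty W] :
    Surjective (bipartiteLevel : U ⊕ W → Fin 2) := by
  intro i
  fin_cases i
  · exact ⟨Sum.inl (Classical.arbitrary U), rfl⟩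
  · exact ⟨Sum.inr (Classical.arbitrary W), rfl⟩

end CompleteBipartite

theorem stmt9_general {α U W : Type*} (A : SimpleGraph α) :
    posetDim (etensorRel A
      (fun p q : U ⊕ W => (∃ u, p = Sum.inl u) ∧ (∃ w, q = Sum.inr w))) ≤
    posetDim (etensorRel A K2dir) := by
  by_cases hUW : Nonempty U ∧ Nonempty W
  · obtain ⟨_, _⟩ := hUW
    simp only [completeBipartite_iff_K2dir, etensorRel_comp]
    rw [posetDim_comp_of_surjective (etensorRel_irrefl A K2dir_irrefl)
      (surjective_id.prodMap bipartiteLevel_surjective)]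
  · rw [posetDim_eq_zero_of_forall_not]
    · exact Nat.zero_le _
    rintro - - ⟨-, ⟨u, -⟩, ⟨w, -⟩⟩
    exact hUW ⟨⟨u⟩, ⟨w⟩⟩

theorem stmt9 {α U W : Type*} [Fintype α] [Fintype U] [Fintype W] (A : SimpleGraph α) :
    posetDim (etensorRel A
      (fun p q : U ⊕ W => (∃ u, p = Sum.inl u) ∧ (∃ w, q = Sum.inr w))) ≤
    posetDim (etensorRel A K2dir) :=
  stmt9_general A
end

section
/- For any undirected graph G: dim(G × K⃗_2) ≤ dim(G ×_e K⃗_2) + χ(G), where K⃗_2 is the poset 1→2, G × K⃗_2 has edges (u,1)(v,2) for uv ∈ E(G), and G ×_e K⃗_2 additionally has edges (u,1)(u,2) for all u. -/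
open SimpleGraph

/-!
Append to a realizer `φ` of `G ×_e K⃗₂` one coordinate per colour of a proper colouring `c`:
`(u, 0)` receives the indicator vector of `c u` and `(u, 1)` its complement. Along an edge `uv`
the colours differ, so the new coordinates of `(u, 0)` stay below those of `(v, 1)`; the
comparabilities `(u, 0) < (u, 1)` are destroyed at coordinate `c u`. No comparability is created:
a strict increase in the `φ`-coordinates already comes from `G ×_e K⃗₂`, while points with equal
`φ`-image lie on the same level, where the colour coordinates are pairwise incomparable.
-/

section Realizer

variable {V ι : Type*} {R : V → V → Prop}

theorem vecLT_iff_lt {d : ℕ} {x y : Fin d → ℝ} : vecLT x y ↔ x < y :=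
  Pi.lt_def.symm

def IsRealizer (R : V → V → Prop) (φ : V → ι → ℝ) : Prop :=
  ∀ u v, u ≠ v → (R u v ↔ φ u < φ v)

theorem Realizes.isRealizer {d : ℕ} {φ : V → Fin d → ℝ} (h : Realizes R φ) : IsRealizer R φ :=
  fun u v huv => (h u v huv).trans vecLT_iff_lt

theorem Pi.comp_equiv_lt_comp_equiv_iff {κ : Type*} (e : κ ≃ ι) {x y : ι → ℝ} :
    x ∘ e < y ∘ e ↔ x < y := by
  simp only [lt_iff_le_not_ge, Pi.le_def, Function.comp_apply, e.forall_congr_left,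
    Equiv.apply_symm_apply]

theorem IsRealizer.realizes_comp_equivFin [Fintype ι] {φ : V → ι → ℝ} (h : IsRealizer R φ) :
    Realizes R fun u => φ u ∘ (Fintype.equivFin ι).symm := fun u v huv => by
  rw [vecLT_iff_lt, Pi.comp_equiv_lt_comp_equiv_iff]
  exact h u v huv

theorem IsRealizer.posetDim_le [Fintype ι] {φ : V → ι → ℝ} (h : IsRealizer R φ) :
    posetDim R ≤ Fintype.card ι :=
  Nat.sInf_le ⟨_, h.realizes_comp_equivFin⟩

theorem IsRealizer.exists_realizes_posetDim [Fintype ι] {φ : V → ι → ℝ} (h : IsRealizer R φ) :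
    ∃ ψ : V → Fin (posetDim R) → ℝ, Realizes R ψ :=
  Nat.sInf_mem (s := {d | ∃ ψ : V → Fin d → ℝ, Realizes R ψ}) ⟨_, _, h.realizes_comp_equivFin⟩

open Classical in
noncomputable def downSetIndicator (R : V → V → Prop) (u w : V) : ℝ :=
  if R w u ∨ w = u then 1 else 0

theorem isRealizer_downSetIndicator (htrans : ∀ u v w, R u v → R v w → R u w)
    (hasymm : ∀ u v, R u v → ¬ R v u) : IsRealizer R (downSetIndicator R) := by
  intro u v huv
  constructor
  · intro hR
    refine Pi.lt_def.2 ⟨fun w => ?_, v, ?_⟩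
    · have hmono : R w u ∨ w = u → R w v ∨ w = v := by
        rintro (h | rfl)
        exacts [Or.inl (htrans _ _ _ h hR), Or.inl hR]
      unfold downSetIndicator
      split_ifs with hu hv <;> first | exact absurd (hmono hu) hv | norm_num
    · simp [downSetIndicator, hasymm _ _ hR, huv.symm]
  · intro hlt
    have hu := hlt.le u
    simp only [downSetIndicator, or_true, if_true] at hu
    split_ifs at hu with h
    · exact h.resolve_right huv
    · norm_num at hu

end Realizer

theorem Sum.elim_lt_elim_iff {α₁ α₂ β : Type*} [Preorder β] {u₁ v₁ : α₁ → β}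
    {u₂ v₂ : α₂ → β} :
    Sum.elim u₁ u₂ < Sum.elim v₁ v₂ ↔ u₁ < v₁ ∧ u₂ ≤ v₂ ∨ u₁ ≤ v₁ ∧ u₂ < v₂ := by
  simp only [lt_iff_le_not_ge, Sum.elim_le_elim_iff]
  tauto

section ExtendedProduct

variable {V : Type*}

theorem etensorRel_K2dir_trans (G : SimpleGraph V) :
    ∀ p q r, etensorRel G K2dir p q → etensorRel G K2dir q r → etensorRel G K2dir p r :=
  fun _ _ _ hpq hqr => absurd (hpq.2.2.symm.trans hqr.2.1) (by decide)

theorem etensorRel_K2dir_asymm (G : SimpleGraph V) :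
    ∀ p q, etensorRel G K2dir p q → ¬ etensorRel G K2dir q p :=
  fun _ _ hpq hqp => absurd (hpq.2.1.symm.trans hqp.2.2) (by decide)

theorem IsRealizer.snd_eq_of_apply_eq {ι : Type*} {G : SimpleGraph V}
    {φ : V × Fin 2 → ι → ℝ} (hφ : IsRealizer (etensorRel G K2dir) φ) {p q : V × Fin 2}
    (h : φ p = φ q) : p.2 = q.2 := by
  have bot_ne_top : ∀ u v, φ (u, 0) ≠ φ (v, 1) := by
    intro u v huv
    have hu : φ (u, 0) < φ (u, 1) := (hφ _ _ (by simp)).1 ⟨Or.inr rfl, rfl, rfl⟩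
    rw [huv] at hu
    obtain rfl | hvu := eq_or_ne v u
    · exact hu.false
    · exact one_ne_zero ((hφ _ _ (by simpa using hvu)).2 hu).2.1
  obtain ⟨u, s⟩ := p
  obtain ⟨v, t⟩ := q
  fin_cases s <;> fin_cases t
  exacts [rfl, (bot_ne_top u v h).elim, (bot_ne_top v u h.symm).elim, rfl]

end ExtendedProduct

section ColorCoord

variable {V α : Type*} [DecidableEq α]

def colorCoord (c : V → α) (p : V × Fin 2) (j : α) : ℝ :=
  if p.2 = 0 then (if c p.1 = j then 1 else 0) else (if c p.1 = j then 0 else 1)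

theorem colorCoord_zero_le_one_iff {c : V → α} {u v : V} :
    colorCoord c (u, 0) ≤ colorCoord c (v, 1) ↔ c u ≠ c v := by
  constructor
  · intro h huv
    have := h (c u)
    norm_num [colorCoord, huv] at this
  · intro h j
    unfold colorCoord
    split_ifs <;> simp_all

theorem not_colorCoord_lt_of_snd_eq {c : V → α} {p q : V × Fin 2} (h : p.2 = q.2) :
    ¬ colorCoord c p < colorCoord c q := by
  intro hlt
  have hc : c p.1 = c q.1 := by
    by_contra hne
    have hp := hlt.le (c p.1)
    have hq := hlt.le (c q.1)
    simp only [colorCoord, h, hne, Ne.symm hne, if_true, if_false] at hp hq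
    split_ifs at hp hq <;> linarith
  exact hlt.ne (funext fun j => by simp only [colorCoord, h, hc])

end ColorCoord

theorem IsRealizer.sumElim_colorCoord {V ι α : Type*} [DecidableEq α] {G : SimpleGraph V}
    {φ : V × Fin 2 → ι → ℝ} (hφ : IsRealizer (etensorRel G K2dir) φ) (C : G.Coloring α) :
    IsRealizer (tensorRel G K2dir) fun p => Sum.elim (φ p) (colorCoord C p) := by
  rintro ⟨u, s⟩ ⟨v, t⟩ hpq
  constructor
  · rintro ⟨hadj, rfl, rfl⟩
    exact Sum.elim_lt_elim_iff.2 <| .inl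
      ⟨(hφ _ _ hpq).1 ⟨.inl hadj, rfl, rfl⟩, colorCoord_zero_le_one_iff.2 (C.valid hadj)⟩
  · intro (hlt : Sum.elim _ _ < Sum.elim _ _)
    obtain ⟨hφle, hcle⟩ := Sum.elim_le_elim_iff.1 hlt.le
    rcases hφle.lt_or_eq with hφlt | hφeq
    · obtain ⟨hadj | rfl, rfl, rfl⟩ := (hφ _ _ hpq).2 hφlt
      · exact ⟨hadj, rfl, rfl⟩
      · exact absurd rfl (colorCoord_zero_le_one_iff.1 hcle)
    · rw [hφeq] at hlt
      have hclt := ((Sum.elim_lt_elim_iff.1 hlt).resolve_left fun h => h.1.false).2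
      exact absurd hclt (not_colorCoord_lt_of_snd_eq (hφ.snd_eq_of_apply_eq hφeq))

theorem stmt12 {V : Type*} [Fintype V] (G : SimpleGraph V) :
    posetDim (tensorRel G K2dir) ≤ posetDim (etensorRel G K2dir) + chromNum G := by
  obtain ⟨C⟩ : G.Colorable (chromNum G) :=
    Nat.sInf_mem (s := {n | G.Colorable n}) ⟨_, G.colorable_of_fintype⟩
  obtain ⟨φ, hφ⟩ := (isRealizer_downSetIndicator (etensorRel_K2dir_trans G)
    (etensorRel_K2dir_asymm G)).exists_realizes_posetDim
  simpa using (hφ.isRealizer.sumElim_colorCoord C).posetDim_le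
end

section
/- For any graph G, any total order σ on V(G × K_2), and any σ-semi-induced matching M of G ×_e K_2, the set M₂ = M ∩ {(u,1)(u,2) : u ∈ V(G)} of 'diagonal' edges projects to an independent set in G; hence |M₂| ≤ α(G). -/
open SimpleGraph

noncomputable def indepNumG {V : Type*} (G : SimpleGraph V) : ℕ :=
  sSup {n | ∃ s : Finset V, s.card = n ∧ ∀ u ∈ s, ∀ v ∈ s, ¬ G.Adj u v}

/-!
If two diagonal edges `{(u,0),(u,1)}` and `{(v,0),(v,1)}` of `G ×_e K₂` had `uv ∈ E(G)`, every
endpoint of each would be adjacent to the endpoint of the other with the opposite second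
coordinate. But in a σ-semi-induced matching the σ-least of the four endpoints is adjacent to
neither endpoint of the other edge. So the first coordinates of the diagonal edges form an
independent set of `G`, of the same size.
-/

lemma etensor_top_adj_or_adj {α β : Type*} (G : SimpleGraph α) {p q r : α × β}
    (hpq : G.Adj p.1 q.1) (hqr : (etensor G ⊤).Adj q r) (hfst : q.1 = r.1) :
    (etensor G ⊤).Adj p q ∨ (etensor G ⊤).Adj p r := by
  by_cases h : p.2 = q.2
  · exact .inr ⟨.inl (hfst ▸ hpq), by simpa [h] using hqr.2⟩
  · exact .inl ⟨.inl hpq, by simpa using h⟩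

lemma card_le_indepNumG {ι V : Type*} [Fintype V] (G : SimpleGraph V) (f : ι → V)
    (hf : Function.Injective f) (hindep : ∀ i j, ¬ G.Adj (f i) (f j)) :
    Nat.card ι ≤ indepNumG G := by
  classical
  have : Finite ι := .of_injective f hf
  have := Fintype.ofFinite ι
  refine le_csSup ⟨Fintype.card V, ?_⟩ ⟨Finset.univ.map ⟨f, hf⟩, ?_, ?_⟩
  · rintro _ ⟨s, rfl, -⟩
    exact s.card_le_univ
  · rw [Finset.card_map, Finset.card_univ, Nat.card_eq_fintype_card]
  · simp only [Finset.mem_map, Finset.mem_univ, true_and, Function.Embedding.coeFn_mk]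
    rintro _ ⟨i, rfl⟩ _ ⟨j, rfl⟩
    exact hindep i j

namespace IsSemiIndMatching

variable {W : Type*} {H : SimpleGraph W} {σ : W → ℕ} {n : ℕ} {a b : Fin n → W}

lemma endpoints_ne (hM : IsSemiIndMatching H σ a b) {i j : Fin n} (hij : i ≠ j) {x y : W}
    (hx : x = a i ∨ x = b i) (hy : y = a j ∨ y = b j) : x ≠ y := by
  obtain ⟨haa, hab, hbb⟩ := hM.2.1 i j hij
  have hba : b i ≠ a j := fun h => (hM.2.1 j i hij.symm).2.1 h.symm
  rcases hx with rfl | rfl <;> rcases hy with rfl | rfl <;> assumption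

lemma not_adj_of_min (hσ : Function.Injective σ) (hM : IsSemiIndMatching H σ a b)
    {i j : Fin n} (hij : i ≠ j) {x : W} (hx : x = a i ∨ x = b i)
    (hai : σ x ≤ σ (a i)) (hbi : σ x ≤ σ (b i)) (haj : σ x ≤ σ (a j)) (hbj : σ x ≤ σ (b j)) :
    ¬ (H.Adj x (a j) ∨ H.Adj x (b j)) := by
  have hlt : ∀ {y}, σ x ≤ σ y → x ≠ y → σ x < σ y := fun hle hne =>
    hle.lt_of_ne (hσ.ne hne)
  have haj' := hlt haj (hM.endpoints_ne hij hx (.inl rfl))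
  have hbj' := hlt hbj (hM.endpoints_ne hij hx (.inr rfl))
  obtain ⟨c₁, c₂, c₃, c₄⟩ := hM.2.2 i j hij
  rw [not_or]
  rcases (hσ.ne (hM.1 j).ne).lt_or_gt with hj | hj <;> rcases hx with rfl | rfl
  · exact c₁ (hlt hbi (hM.1 i).ne) haj' hj
  · exact c₃ (hlt hai (hM.1 i).ne') haj' hj
  · exact (c₂ (hlt hbi (hM.1 i).ne) hbj' hj).symm
  · exact (c₄ (hlt hai (hM.1 i).ne') hbj' hj).symm

lemma not_mutually_adj (hσ : Function.Injective σ) (hM : IsSemiIndMatching H σ a b)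
    {i j : Fin n} (hij : i ≠ j)
    (hi : ∀ x, x = a i ∨ x = b i → H.Adj x (a j) ∨ H.Adj x (b j))
    (hj : ∀ y, y = a j ∨ y = b j → H.Adj y (a i) ∨ H.Adj y (b i)) : False := by
  classical
  obtain ⟨x, hx, hmin⟩ :=
    ({a i, b i, a j, b j} : Finset W).exists_min_image σ (Finset.insert_nonempty _ _)
  simp only [Finset.mem_insert, Finset.mem_singleton, forall_eq_or_imp, forall_eq] at hx hmin
  obtain ⟨hai, hbi, haj, hbj⟩ := hmin
  rcases (or_assoc.mpr hx) with hx | hx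
  · exact hM.not_adj_of_min hσ hij hx hai hbi haj hbj (hi x hx)
  · exact hM.not_adj_of_min hσ hij.symm hx haj hbj hai hbi (hj x hx)

variable {V β : Type*} {G : SimpleGraph V} {σ : V × β → ℕ} {a b : Fin n → V × β}

lemma not_adj_fst_of_fst_eq (hσ : Function.Injective σ)
    (hM : IsSemiIndMatching (etensor G (⊤ : SimpleGraph β)) σ a b) {i j : Fin n} (hij : i ≠ j)
    (hi : (a i).1 = (b i).1) (hj : (a j).1 = (b j).1) : ¬ G.Adj (a i).1 (a j).1 := by
  intro hG
  refine hM.not_mutually_adj hσ hij ?_ ?_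
  · rintro x (rfl | rfl)
    exacts [etensor_top_adj_or_adj G hG (hM.1 j) hj,
      etensor_top_adj_or_adj G (hi ▸ hG) (hM.1 j) hj]
  · rintro y (rfl | rfl)
    exacts [etensor_top_adj_or_adj G hG.symm (hM.1 i) hi,
      etensor_top_adj_or_adj G (hj ▸ hG.symm) (hM.1 i) hi]

lemma fst_ne_of_fst_eq {σ : V × Fin 2 → ℕ} {a b : Fin n → V × Fin 2}
    (hM : IsSemiIndMatching (etensor G ⊤) σ a b) {i j : Fin n} (hij : i ≠ j)
    (hj : (a j).1 = (b j).1) : (a i).1 ≠ (a j).1 := by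
  intro h
  have hsnd : (a i).2 = (a j).2 ∨ (a i).2 = (b j).2 := by
    have : (a j).2 ≠ (b j).2 := (hM.1 j).2.ne
    omega
  rcases hsnd with hsnd | hsnd
  · exact hM.endpoints_ne hij (.inl rfl) (.inl rfl) (Prod.ext h hsnd)
  · exact hM.endpoints_ne hij (.inl rfl) (.inr rfl) (Prod.ext (h.trans hj) hsnd)

end IsSemiIndMatching

theorem stmt18 {V : Type*} [Fintype V] (G : SimpleGraph V) (σ : V × Fin 2 → ℕ)
    (hσ : Function.Injective σ) (n : ℕ) (a b : Fin n → V × Fin 2)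
    (hM : IsSemiIndMatching (etensor G (⊤ : SimpleGraph (Fin 2))) σ a b) :
    (∀ i j, i ≠ j → (a i).1 = (b i).1 → (a j).1 = (b j).1 →
      (a i).1 ≠ (a j).1 ∧ ¬ G.Adj (a i).1 (a j).1) ∧
    Nat.card {i : Fin n // (a i).1 = (b i).1} ≤ indepNumG G := by
  have hdiag : ∀ i j, i ≠ j → (a i).1 = (b i).1 → (a j).1 = (b j).1 →
      (a i).1 ≠ (a j).1 ∧ ¬ G.Adj (a i).1 (a j).1 := fun i j hij hi hj =>
    ⟨hM.fst_ne_of_fst_eq hij hj, hM.not_adj_fst_of_fst_eq hσ hij hi hj⟩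
  refine ⟨hdiag, card_le_indepNumG G (fun i : {i // (a i).1 = (b i).1} => (a i).1) ?_ ?_⟩
  · intro i j h
    by_contra hne
    exact (hdiag i j (Subtype.coe_injective.ne hne) i.2 j.2).1 h
  · intro i j
    rcases eq_or_ne i j with rfl | hne
    · exact G.loopless.irrefl _
    · exact (hdiag i j (Subtype.coe_injective.ne hne) i.2 j.2).2
end

section
/- For any graphs G, H, J and any total order σ on V((G ∨ H) × J), there exist total orders σ₁ on V(G × J) and σ₂ on V(H × J) such that sim_σ((G ∨ H) × J) ≤ sim_{σ₁}(G × J) + sim_{σ₂}(H × J). -/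
open SimpleGraph

/-!
Take a maximum σ-semi-induced matching of `(G ∨ H) × J`. Each of its edges projects to an edge
of `G × J` or of `H × J`, and the projection `π` in either case reflects adjacency:
`π x ~ π y` implies `x ~ y`. Projecting the edges of the first (resp. second) kind therefore
gives a semi-induced matching of `G × J` (resp. `H × J`), ordered by the order σ induces on the
projected endpoints, provided `π` is injective on those endpoints. It is, because two distinct
edges `uu'`, `vv'` of a semi-induced matching never carry both `uv` and `u'v'`: the σ-least of
the four endpoints would be adjacent to the other edge.
-/

open Function Finset

section

variable {V W : Type*} {B : SimpleGraph V} {σ : V → ℕ} {n : ℕ} {a b : Fin n → V}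

theorem IsSemiIndMatching.injective_left (hm : IsSemiIndMatching B σ a b) : Injective a :=
  fun i j h => by_contra fun hij => (hm.2.1 i j hij).1 h

theorem bddAbove_setOf_isSemiIndMatching [Finite V] (B : SimpleGraph V) (σ : V → ℕ) :
    BddAbove {n | ∃ a b : Fin n → V, IsSemiIndMatching B σ a b} := by
  refine ⟨Nat.card V, ?_⟩
  rintro n ⟨a, b, hm⟩
  simpa using Nat.card_le_card_of_injective a hm.injective_left

theorem exists_isSemiIndMatching_card_eq_simNumOrd [Finite V] (B : SimpleGraph V) (σ : V → ℕ) :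
    ∃ a b : Fin (simNumOrd B σ) → V, IsSemiIndMatching B σ a b :=
  Nat.sSup_mem (s := {n | ∃ a b : Fin n → V, IsSemiIndMatching B σ a b})
    ⟨0, Fin.elim0, Fin.elim0, fun i => i.elim0, fun i => i.elim0, fun i => i.elim0⟩
    (bddAbove_setOf_isSemiIndMatching B σ)

theorem IsSemiIndMatching.le_simNumOrd [Finite V] (hm : IsSemiIndMatching B σ a b) :
    n ≤ simNumOrd B σ :=
  le_csSup (bddAbove_setOf_isSemiIndMatching B σ) ⟨a, b, hm⟩

namespace IsSemiIndMatching

theorem comp {m : ℕ} (hm : IsSemiIndMatching B σ a b) {f : Fin m → Fin n} (hf : Injective f) :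
    IsSemiIndMatching B σ (a ∘ f) (b ∘ f) :=
  ⟨fun k => hm.1 (f k), fun _ _ h => hm.2.1 _ _ (hf.ne h), fun _ _ h => hm.2.2 _ _ (hf.ne h)⟩

section Endpoints

variable {i j : Fin n} {u u' v v' : V}

-- `s(u, u') = s(a i, b i)` says that `u` is an endpoint of the `i`-th edge and `u'` its partner.

theorem adj (hm : IsSemiIndMatching B σ a b) (hu : s(u, u') = s(a i, b i)) : B.Adj u u' :=
  (B.adj_congr_of_sym2 hu).2 (hm.1 i)

theorem ne (hm : IsSemiIndMatching B σ a b) (hij : i ≠ j) (hu : s(u, u') = s(a i, b i))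
    (hv : s(v, v') = s(a j, b j)) : u ≠ v := by
  rw [Sym2.eq_iff] at hu hv
  obtain ⟨haa, hab, hbb⟩ := hm.2.1 i j hij
  rcases hu with ⟨rfl, rfl⟩ | ⟨rfl, rfl⟩ <;> rcases hv with ⟨rfl, rfl⟩ | ⟨rfl, rfl⟩
  exacts [haa, hab, (hm.2.1 j i hij.symm).2.1.symm, hbb]

theorem semiCond (hm : IsSemiIndMatching B σ a b) (hij : i ≠ j) (hu : s(u, u') = s(a i, b i))
    (hv : s(v, v') = s(a j, b j)) : SemiCond B σ u u' v v' := by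
  rw [Sym2.eq_iff] at hu hv
  obtain ⟨h₁, h₂, h₃, h₄⟩ := hm.2.2 i j hij
  rcases hu with ⟨rfl, rfl⟩ | ⟨rfl, rfl⟩ <;> rcases hv with ⟨rfl, rfl⟩ | ⟨rfl, rfl⟩
  exacts [h₁, h₂, h₃, h₄]

theorem not_adj_of_lt (hm : IsSemiIndMatching B σ a b) (hσ : Injective σ) (hij : i ≠ j)
    (hu : s(u, u') = s(a i, b i)) (hv : s(v, v') = s(a j, b j))
    (hu' : σ u < σ u') (huv : σ u < σ v) (huv' : σ u < σ v') : ¬ B.Adj u v := by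
  rcases (hσ.ne (hm.adj hv).ne).lt_or_gt with hvv' | hvv'
  · exact (hm.semiCond hij hu hv hu' huv hvv').1
  · exact (hm.semiCond hij hu (Sym2.eq_swap.trans hv) hu' huv' hvv').2

theorem not_adj_and_adj (hm : IsSemiIndMatching B σ a b) (hσ : Injective σ) (hij : i ≠ j)
    (hu : s(u, u') = s(a i, b i)) (hv : s(v, v') = s(a j, b j)) :
    ¬ (B.Adj u v ∧ B.Adj u' v') := by
  rintro ⟨huv, hu'v'⟩
  have hu₂ := Sym2.eq_swap.trans hu
  have hv₂ := Sym2.eq_swap.trans hv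
  have := hσ.ne (hm.adj hu).ne
  have := hσ.ne (hm.adj hv).ne
  have := hσ.ne huv.ne
  have := hσ.ne hu'v'.ne
  have := hσ.ne (hm.ne hij hu hv₂)
  have := hσ.ne (hm.ne hij hu₂ hv)
  obtain h | h | h | h : (σ u < σ u' ∧ σ u < σ v ∧ σ u < σ v') ∨
      (σ u' < σ u ∧ σ u' < σ v' ∧ σ u' < σ v) ∨ (σ v < σ v' ∧ σ v < σ u ∧ σ v < σ u') ∨
      (σ v' < σ v ∧ σ v' < σ u' ∧ σ v' < σ u) := by omega
  · exact hm.not_adj_of_lt hσ hij hu hv h.1 h.2.1 h.2.2 huv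
  · exact hm.not_adj_of_lt hσ hij hu₂ hv₂ h.1 h.2.1 h.2.2 hu'v'
  · exact hm.not_adj_of_lt hσ hij.symm hv hu h.1 h.2.1 h.2.2 huv.symm
  · exact hm.not_adj_of_lt hσ hij.symm hv₂ hu₂ h.1 h.2.1 h.2.2 hu'v'.symm

theorem eq_of_map_eq {K : SimpleGraph W} {π : V → W} (hm : IsSemiIndMatching B σ a b)
    (hσ : Injective σ) (hπ : ∀ x y, K.Adj (π x) (π y) → B.Adj x y)
    (hK : ∀ i, K.Adj (π (a i)) (π (b i))) (hu : s(u, u') = s(a i, b i))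
    (hv : s(v, v') = s(a j, b j)) (h : π u = π v) : u = v := by
  have hK' {i : Fin n} {x x' : V} (hx : s(x, x') = s(a i, b i)) : K.Adj (π x) (π x') :=
    (K.adj_congr_of_sym2 (by simpa using congrArg (Sym2.map π) hx)).2 (hK i)
  by_cases hij : i = j
  · subst hij
    rcases Sym2.eq_iff.1 (hu.trans hv.symm) with ⟨huv, -⟩ | ⟨rfl, -⟩
    · exact huv
    · exact absurd (h ▸ hK' hv) K.irrefl
  · exact absurd ⟨hπ _ _ (h ▸ hK' hv), hπ _ _ (h ▸ hK' hu).symm⟩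
      (hm.not_adj_and_adj hσ hij hu (Sym2.eq_swap.trans hv))

end Endpoints

end IsSemiIndMatching

theorem SemiCond.map {K : SimpleGraph W} {π : V → W}
    (hπ : ∀ x y, K.Adj (π x) (π y) → B.Adj x y) {u u' v v' : V} (h : SemiCond B σ u u' v v')
    {σ' : W → ℕ} {f : ℕ → ℕ} (hf : StrictMono f)
    (hu : σ' (π u) = f (σ u)) (hu' : σ' (π u') = f (σ u')) (hv : σ' (π v) = f (σ v))
    (hv' : σ' (π v') = f (σ v')) : SemiCond K σ' (π u) (π u') (π v) (π v') := by
  intro h₁ h₂ h₃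
  rw [hu, hu', hf.lt_iff_lt] at h₁
  rw [hu, hv, hf.lt_iff_lt] at h₂
  rw [hv, hv', hf.lt_iff_lt] at h₃
  exact (h h₁ h₂ h₃).imp (mt (hπ _ _)) (mt (hπ _ _))

theorem exists_injective_comp_eq_two_mul [Countable W] {σ : V → ℕ} (hσ : Injective σ)
    {π : V → W} {E : Set V} (hπ : Set.InjOn π E) :
    ∃ σ' : W → ℕ, Injective σ' ∧ ∀ x ∈ E, σ' (π x) = 2 * σ x := by
  classical
  obtain ⟨g, hg⟩ := Countable.exists_injective_nat W
  -- even values carry the order of `σ` across `π`, odd values fill in the rest of `W`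
  let σ' : W → ℕ := fun w => if h : ∃ x ∈ E, π x = w then 2 * σ h.choose else 2 * g w + 1
  refine ⟨σ', fun w w' hw => ?_, fun x hx => ?_⟩
  · by_cases h : ∃ x ∈ E, π x = w <;> by_cases h' : ∃ x ∈ E, π x = w' <;>
      simp only [σ', h, h', dite_true, dite_false] at hw
    · rw [← h.choose_spec.2, ← h'.choose_spec.2,
        hσ (show σ h.choose = σ h'.choose by omega)]
    · omega
    · omega
    · exact hg (by omega)
  · have h : ∃ y ∈ E, π y = π x := ⟨x, hx, rfl⟩
    simp only [σ', h, dite_true, hπ h.choose_spec.1 hx h.choose_spec.2]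

namespace IsSemiIndMatching

theorem exists_map [Countable W] {K : SimpleGraph W} {π : V → W}
    (hm : IsSemiIndMatching B σ a b) (hσ : Injective σ)
    (hπ : ∀ x y, K.Adj (π x) (π y) → B.Adj x y) (hK : ∀ i, K.Adj (π (a i)) (π (b i))) :
    ∃ σ' : W → ℕ, Injective σ' ∧ IsSemiIndMatching K σ' (π ∘ a) (π ∘ b) := by
  have hinj : Set.InjOn π (Set.range a ∪ Set.range b) := by
    rintro _ (⟨i, rfl⟩ | ⟨i, rfl⟩) _ (⟨j, rfl⟩ | ⟨j, rfl⟩) h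
    exacts [hm.eq_of_map_eq hσ hπ hK rfl rfl h,
      hm.eq_of_map_eq hσ hπ hK rfl Sym2.eq_swap h,
      hm.eq_of_map_eq hσ hπ hK Sym2.eq_swap rfl h,
      hm.eq_of_map_eq hσ hπ hK Sym2.eq_swap Sym2.eq_swap h]
  obtain ⟨σ', hσ', hσ'π⟩ := exists_injective_comp_eq_two_mul hσ hinj
  have ha i : σ' (π (a i)) = 2 * σ (a i) := hσ'π _ (Or.inl ⟨i, rfl⟩)
  have hb i : σ' (π (b i)) = 2 * σ (b i) := hσ'π _ (Or.inr ⟨i, rfl⟩)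
  have hf : StrictMono (2 * · : ℕ → ℕ) := fun _ _ h => by dsimp only; omega
  refine ⟨σ', hσ', hK, fun i j hij => ?_, fun i j hij => ?_⟩
  · obtain ⟨haa, hab, hbb⟩ := hm.2.1 i j hij
    exact ⟨mt (hinj (Or.inl ⟨i, rfl⟩) (Or.inl ⟨j, rfl⟩)) haa,
      mt (hinj (Or.inl ⟨i, rfl⟩) (Or.inr ⟨j, rfl⟩)) hab,
      mt (hinj (Or.inr ⟨i, rfl⟩) (Or.inr ⟨j, rfl⟩)) hbb⟩
  · obtain ⟨h₁, h₂, h₃, h₄⟩ := hm.2.2 i j hij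
    exact ⟨h₁.map hπ hf (ha i) (hb i) (ha j) (hb j),
      h₂.map hπ hf (ha i) (hb i) (hb j) (ha j),
      h₃.map hπ hf (hb i) (ha i) (ha j) (hb j),
      h₄.map hπ hf (hb i) (ha i) (hb j) (ha j)⟩

theorem exists_card_le_simNumOrd [Finite W] {K : SimpleGraph W} {π : V → W}
    (hm : IsSemiIndMatching B σ a b) (hσ : Injective σ)
    (hπ : ∀ x y, K.Adj (π x) (π y) → B.Adj x y) (S : Finset (Fin n))
    (hS : ∀ i ∈ S, K.Adj (π (a i)) (π (b i))) :
    ∃ σ' : W → ℕ, Injective σ' ∧ #S ≤ simNumOrd K σ' := by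
  let f : Fin #S → Fin n := fun k => S.equivFin.symm k
  have hf : Injective f := Subtype.val_injective.comp S.equivFin.symm.injective
  obtain ⟨σ', hσ', hm'⟩ :=
    (hm.comp hf).exists_map hσ hπ fun k => hS _ (S.equivFin.symm k).2
  exact ⟨σ', hσ', hm'.le_simNumOrd⟩

end IsSemiIndMatching

end

theorem stmt19 {α β γ : Type*} [Fintype α] [Fintype β] [Fintype γ]
    (G : SimpleGraph α) (H : SimpleGraph β) (J : SimpleGraph γ)
    (σ : (α × β) × γ → ℕ) (hσ : Function.Injective σ) :
    ∃ (σ₁ : α × γ → ℕ) (σ₂ : β × γ → ℕ),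
      Function.Injective σ₁ ∧ Function.Injective σ₂ ∧
      simNumOrd (tensor (disj G H) J) σ ≤
        simNumOrd (tensor G J) σ₁ + simNumOrd (tensor H J) σ₂ := by
  classical
  obtain ⟨a, b, hm⟩ := exists_isSemiIndMatching_card_eq_simNumOrd (tensor (disj G H) J) σ
  let S := univ.filter fun i => G.Adj (a i).1.1 (b i).1.1
  obtain ⟨σ₁, hσ₁, h₁⟩ := hm.exists_card_le_simNumOrd (K := tensor G J)
    (π := fun x => (x.1.1, x.2)) hσ (fun _ _ h => ⟨Or.inl h.1, h.2⟩) S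
    fun i hi => ⟨(mem_filter.1 hi).2, (hm.1 i).2⟩
  obtain ⟨σ₂, hσ₂, h₂⟩ := hm.exists_card_le_simNumOrd (K := tensor H J)
    (π := fun x => (x.1.2, x.2)) hσ (fun _ _ h => ⟨Or.inr h.1, h.2⟩) Sᶜ
    fun i hi => ⟨(hm.1 i).1.resolve_left (by simpa [S] using hi), (hm.1 i).2⟩
  refine ⟨σ₁, σ₂, hσ₁, hσ₂, ?_⟩
  calc simNumOrd (tensor (disj G H) J) σ = #S + #Sᶜ := by simp [card_add_card_compl]
    _ ≤ _ := add_le_add h₁ h₂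
end
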